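/- If a graph G on n vertices admits a Hamiltonian path starting at vertex v, then there exists a symmetric weight assignment supported on the edges of G (namely weight 1 on the path edges and 0 elsewhere) such that the resulting weighted adjacency matrix A with input e_v yields a controllable pair (A, e_v). -/
import Mathlib

noncomputable section

/-- Adjacency matrix of the path `0 - 1 - ⋯ - (n-1)`. -/
def pathMat (n : ℕ) : Matrix (Fin n) (Fin n) ℝ :=
  Matrix.of fun i j => if (i : ℕ) + 1 = j ∨ (j : ℕ) + 1 = i then 1 else 0

lemma pathMat_key (n : ℕ) (hn : 0 < n) (k : ℕ) :
    ∀ i : Fin n,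
      (k < (i : ℕ) → ((pathMat n ^ k).mulVec (Pi.single (⟨0, hn⟩ : Fin n) 1)) i = 0) ∧
      ((i : ℕ) = k → ((pathMat n ^ k).mulVec (Pi.single (⟨0, hn⟩ : Fin n) 1)) i = 1) := by
  induction k with
  | zero =>
    intro i
    simp only [pow_zero, Matrix.one_mulVec]
    constructor
    · intro hi
      rw [Pi.single_apply, if_neg]
      intro h; subst h; simp at hi
    · intro hi
      rw [Pi.single_apply, if_pos]
      exact Fin.ext hi
  | succ k ih =>
    intro i
    have hx : (pathMat n ^ (k+1)).mulVec (Pi.single (⟨0, hn⟩ : Fin n) 1) i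
        = ∑ j, pathMat n i j * ((pathMat n ^ k).mulVec (Pi.single (⟨0, hn⟩ : Fin n) 1)) j := by
      rw [pow_succ', ← Matrix.mulVec_mulVec]
      rfl
    constructor
    · intro hi
      rw [hx]
      apply Finset.sum_eq_zero
      intro j _
      by_cases hM : (i : ℕ) + 1 = j ∨ (j : ℕ) + 1 = i
      · have hj : k < (j : ℕ) := by omega
        rw [(ih j).1 hj, mul_zero]
      · simp only [pathMat, Matrix.of_apply, if_neg hM, zero_mul]
    · intro hi
      rw [hx]
      have hk : k < n := by omega
      rw [Finset.sum_eq_single (⟨k, hk⟩ : Fin n)]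
      · have h1 : pathMat n i ⟨k, hk⟩ = 1 := by
          simp only [pathMat, Matrix.of_apply]
          rw [if_pos]
          right; simpa using hi.symm
        rw [h1, one_mul]
        exact (ih ⟨k, hk⟩).2 rfl
      · intro j _ hj
        by_cases hM : (i : ℕ) + 1 = j ∨ (j : ℕ) + 1 = i
        · have hj' : (j : ℕ) ≠ k := fun h => hj (Fin.ext (by simpa using h))
          have hjk : k < (j : ℕ) := by omega
          rw [(ih j).1 hjk, mul_zero]
        · simp only [pathMat, Matrix.of_apply, if_neg hM, zero_mul]
      · intro h; simp at h

lemma isUnit_ctrb_path (n : ℕ) (hn : 0 < n) :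
    IsUnit (Matrix.of fun i j : Fin n =>
      ((pathMat n ^ (j : ℕ)).mulVec (Pi.single (⟨0, hn⟩ : Fin n) 1)) i) := by
  set C : Matrix (Fin n) (Fin n) ℝ := Matrix.of fun i j : Fin n =>
      ((pathMat n ^ (j : ℕ)).mulVec (Pi.single (⟨0, hn⟩ : Fin n) 1)) i with hC
  have htri : C.BlockTriangular id := by
    intro i j hij
    exact (pathMat_key n hn j i).1 hij
  rw [Matrix.isUnit_iff_isUnit_det, Matrix.det_of_upperTriangular htri]
  have : ∀ i : Fin n, C i i = 1 := fun i => (pathMat_key n hn i i).2 rfl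
  simp [this]

end

open Classical in
/-- Controllability matrix: columns are `A^j b` for `j = 0, …, n-1`. -/
def ctrbMat {n : ℕ} (A : Matrix (Fin n) (Fin n) ℝ) (b : Fin n → ℝ) :
    Matrix (Fin n) (Fin n) ℝ :=
  Matrix.of fun i j => (A ^ (j : ℕ)).mulVec b i

open Classical in
theorem stmt_17 (n : ℕ) (hn : 0 < n) (G : SimpleGraph (Fin n)) (v : Fin n)
    (w : Fin n → Fin n) (hbij : Function.Bijective w) (hstart : w ⟨0, hn⟩ = v)
    (hpath : ∀ i j : Fin n, (i : ℕ) + 1 = j → G.Adj (w i) (w j)) :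
    ∃ A : Matrix (Fin n) (Fin n) ℝ,
      (∀ i j : Fin n, A i j =
        if ∃ k l : Fin n, (k : ℕ) + 1 = l ∧
            ((i = w k ∧ j = w l) ∨ (i = w l ∧ j = w k)) then 1 else 0) ∧
      A.IsSymm ∧ (∀ i j, A i j ≠ 0 → G.Adj i j) ∧
      IsUnit (ctrbMat A (Pi.single v 1)) := by
  set σ : Fin n ≃ Fin n := Equiv.ofBijective w hbij with hσ
  have hσw : ∀ k, σ k = w k := fun k => rfl
  have hσ0 : σ.symm v = ⟨0, hn⟩ := by
    apply σ.injective
    rw [Equiv.apply_symm_apply, hσw, hstart]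
  have hws : ∀ i, w (σ.symm i) = i := fun i => by
    rw [← hσw, Equiv.apply_symm_apply]
  have hsw : ∀ k, σ.symm (w k) = k := fun k => by
    rw [← hσw, Equiv.symm_apply_apply]
  refine ⟨(pathMat n).submatrix σ.symm σ.symm, ?_, ?_, ?_, ?_⟩
  · intro i j
    simp only [Matrix.submatrix_apply, pathMat, Matrix.of_apply]
    apply if_congr _ rfl rfl
    constructor
    · rintro (h | h)
      · exact ⟨σ.symm i, σ.symm j, h, Or.inl ⟨(hws i).symm, (hws j).symm⟩⟩
      · exact ⟨σ.symm j, σ.symm i, h, Or.inr ⟨(hws i).symm, (hws j).symm⟩⟩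
    · rintro ⟨k, l, hkl, (⟨hi, hj⟩ | ⟨hi, hj⟩)⟩ <;> subst hi <;> subst hj
      · left; rw [hsw, hsw]; exact hkl
      · right; rw [hsw, hsw]; exact hkl
  · apply Matrix.IsSymm.ext
    intro i j
    simp only [Matrix.submatrix_apply, pathMat, Matrix.of_apply]
    apply if_congr (or_comm) rfl rfl
  · intro i j hAij
    simp only [Matrix.submatrix_apply, pathMat, Matrix.of_apply] at hAij
    by_cases h : (σ.symm i : ℕ) + 1 = σ.symm j ∨ (σ.symm j : ℕ) + 1 = σ.symm i
    · rcases h with h | h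
      · have := hpath _ _ h; rw [hws, hws] at this; exact this
      · have := hpath _ _ h; rw [hws, hws] at this; exact this.symm
    · rw [if_neg h] at hAij; exact absurd rfl hAij
  · have hA : ∀ j : ℕ, ((pathMat n).submatrix σ.symm σ.symm : Matrix (Fin n) (Fin n) ℝ) ^ j
        = (pathMat n ^ j).submatrix σ.symm σ.symm := by
      intro j
      have h := map_pow (Matrix.reindexAlgEquiv ℝ ℝ σ) (pathMat n) j
      simpa [Matrix.reindexAlgEquiv_apply, Matrix.reindex_apply] using h.symm
    have hsingle : (Pi.single v 1 : Fin n → ℝ) ∘ σ = Pi.single (⟨0, hn⟩ : Fin n) 1 := by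
      funext t
      simp only [Function.comp_apply, Pi.single_apply]
      apply if_congr _ rfl rfl
      rw [← hσ0, Equiv.apply_eq_iff_eq_symm_apply]
    have hc : ctrbMat ((pathMat n).submatrix σ.symm σ.symm) (Pi.single v 1)
        = (Matrix.of fun i j : Fin n =>
            ((pathMat n ^ (j : ℕ)).mulVec (Pi.single (⟨0, hn⟩ : Fin n) 1)) i).submatrix
            σ.symm id := by
      ext i j
      simp only [ctrbMat, Matrix.of_apply, Matrix.submatrix_apply, id_eq]
      rw [hA]
      have h2 := Matrix.submatrix_mulVec_equiv (pathMat n ^ (j : ℕ)) (Pi.single v 1)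
        (⇑σ.symm) σ.symm
      rw [h2]
      simp only [Function.comp_apply, Equiv.symm_symm]
      rw [show ((Pi.single v 1 : Fin n → ℝ) ∘ ⇑σ) = Pi.single (⟨0, hn⟩ : Fin n) 1 from hsingle]
    rw [hc, Matrix.isUnit_iff_isUnit_det, Matrix.det_permute σ.symm]
    exact IsUnit.mul ((Equiv.Perm.sign σ.symm).isUnit.map (Int.castRingHom ℝ))
      ((Matrix.isUnit_iff_isUnit_det _).mp (isUnit_ctrb_path n hn))
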